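/- arXiv:1401.4136 — 3 statements merged into one kernel-verified Lean document; each statement's English description precedes it below -/
import Mathlib

section
/- Let p(x) ∈ F_q[x] be a monic irreducible polynomial of degree k with p(1) ≠ 0 and p(0) ≠ 0. Let m = q^k - 1 and g(x) = (x^m - 1)/((x-1)p(x)). Then p(x) is primitive if and only if g(x) is a polynomial with exactly (q-1)q^(k-1) - 1 nonzero coefficients. -/
/-!
Let `α` be a root of `p` in `E = 𝔽_{q^k}` and `m = q^k - 1`. Since `∑_{x ∈ E} x^n` is `-1` when
`m ∣ n ≠ 0` and `0` otherwise, `g_j = -∑_{x ∈ E} g(x) x^{m-j}`. On `Eˣ` we have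
`(x - 1) p(x) g(x) = x^m - 1 = 0`, so only `x = 1` and the conjugates `α^{q^i}` contribute, and by
Frobenius the conjugates add up to a trace: `g_j = -(g(1) + Tr(g(α) α^{-j}))`. Here `g(1) ≠ 0`
because `p(1) g(1) = m = -1`, and `g(α) ≠ 0` because `X^m - 1` is squarefree. If `α` is primitive,
`g(α) α^{-j}` runs through `Eˣ` for `j < m`, so `g_j = 0` for as many `j` as there are elements of
trace `-g(1)`, that is `q^{k-1}`.

Conversely, if `α` has order `d ∣ m`, then `(X - 1) p ∣ X^d - 1`, so `g = h (1 + X^d + ⋯)` with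
`m / d` blocks of the coefficients of `h`, and `m / d` divides the number of nonzero coefficients.
If that number is `m - q^{k-1}`, then `m / d` divides both `q^{k-1}` and `q^k - 1`, so `d = m`.
-/

open Polynomial Finset

namespace Polynomial

variable {R : Type*} [Semiring R] {f h : R[X]}

theorem support_add_mul_X_pow {N : ℕ} (hf : f.support ⊆ range N) :
    (f + h * X ^ N).support = f.support ∪ h.support.map (addRightEmbedding N) := by
  ext i
  simp only [mem_union, mem_map, mem_support_iff, coeff_add, coeff_mul_X_pow',
    addRightEmbedding_apply]
  by_cases hi : N ≤ i
  · have hfi : f.coeff i = 0 :=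
      notMem_support_iff.mp fun hmem => absurd (mem_range.mp (hf hmem)) (by omega)
    simp only [hi, if_true, hfi, zero_add, ne_eq, not_true_eq_false, false_or]
    exact ⟨fun hc => ⟨i - N, hc, by omega⟩, by rintro ⟨r, hr, rfl⟩; simpa using hr⟩
  · simp only [hi, if_false, add_zero]
    exact ⟨Or.inl, fun h' => h'.resolve_right (by rintro ⟨r, -, rfl⟩; omega)⟩

theorem card_support_add_mul_X_pow {N : ℕ} (hf : f.support ⊆ range N) :
    #(f + h * X ^ N).support = #f.support + #h.support := by
  rw [support_add_mul_X_pow hf, card_union_of_disjoint, card_map]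
  refine disjoint_left.mpr fun i hi hi' => ?_
  obtain ⟨r, -, rfl⟩ := mem_map.mp hi'
  exact absurd (mem_range.mp (hf hi)) (by simp)

theorem card_support_mul_geom_sum {d : ℕ} (hh : h.natDegree < d) (n : ℕ) :
    #(h * ∑ t ∈ range n, (X ^ d) ^ t).support = n * #h.support := by
  suffices (h * ∑ t ∈ range n, (X ^ d) ^ t).support ⊆ range (d * n) ∧
      #(h * ∑ t ∈ range n, (X ^ d) ^ t).support = n * #h.support from this.2
  induction n with
  | zero => simp
  | succ n ih =>
    rw [sum_range_succ, mul_add, ← pow_mul]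
    refine ⟨?_, by rw [card_support_add_mul_X_pow ih.1, ih.2, Nat.succ_mul]⟩
    rw [support_add_mul_X_pow ih.1]
    refine union_subset (ih.1.trans (range_subset_range.mpr (Nat.mul_le_mul_left d n.le_succ))) ?_
    intro i hi
    obtain ⟨r, hr, rfl⟩ := mem_map.mp hi
    have := mem_range.mp (supp_subset_range hh hr)
    simp only [addRightEmbedding_apply, mem_range]
    nlinarith

theorem card_support_add_card_filter_coeff_eq_zero [DecidableEq R] {n : ℕ}
    (hf : f.natDegree < n) :
    #f.support + #{j ∈ range n | f.coeff j = 0} = n := by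
  have hsupp : f.support = {j ∈ range n | ¬f.coeff j = 0} := by
    ext j
    simp only [mem_filter, mem_support_iff]
    exact ⟨fun hj => ⟨supp_subset_range hf (mem_support_iff.mpr hj), hj⟩, And.right⟩
  rw [hsupp, add_comm, card_filter_add_card_filter_not, card_range]

theorem aeval_one_eq_algebraMap_eval {S A : Type*} [CommSemiring S] [Semiring A] [Algebra S A]
    (g : S[X]) : aeval (1 : A) g = algebraMap S A (g.eval 1) := by
  rw [← map_one (algebraMap S A), aeval_algebraMap_apply, coe_aeval_eq_eval]

end Polynomial

namespace FiniteField

variable {K : Type*} [Field K] [Fintype K]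

theorem sum_pow_of_ne_zero {n : ℕ} (hn : n ≠ 0) :
    ∑ x : K, x ^ n = if Fintype.card K - 1 ∣ n then -1 else 0 := by
  classical
  rw [← sum_pow_units, ← Fintype.sum_equiv unitsEquivNeZero.symm (fun x : {a : K // a ≠ 0} ↦
    (x : K) ^ n) _ (fun _ => rfl), ← sum_subtype (p := (· ≠ 0)) (univ.erase 0) (by simp) (· ^ n),
    sum_erase _ (zero_pow hn)]

theorem sum_eval_mul_pow_eq_neg_coeff {G : K[X]} (hG : G.natDegree < Fintype.card K - 1)
    {j : ℕ} (hj : j < Fintype.card K - 1) :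
    ∑ x : K, G.eval x * x ^ (Fintype.card K - 1 - j) = -G.coeff j := by
  set m := Fintype.card K - 1
  have hdvd : ∀ t < m, (m ∣ t + (m - j) ↔ t = j) := by
    intro t ht
    refine ⟨fun hm => ?_, fun htj => ⟨1, by omega⟩⟩
    have := Nat.eq_of_dvd_of_lt_two_mul (by omega) hm (by omega)
    omega
  calc ∑ x : K, G.eval x * x ^ (m - j)
      = ∑ t ∈ range m, G.coeff t * ∑ x : K, x ^ (t + (m - j)) := by
        simp_rw [eval_eq_sum_range' hG, sum_mul, mul_sum, pow_add, mul_assoc]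
        exact sum_comm
    _ = ∑ t ∈ range m, G.coeff t * if t = j then -1 else 0 := by
        refine sum_congr rfl fun t ht => ?_
        rw [sum_pow_of_ne_zero (by omega), if_congr (hdvd t (mem_range.mp ht)) rfl rfl]
    _ = -G.coeff j := by simp [mul_ite, hj]

theorem card_filter_range_mul_pow {β δ : K} (hβ : orderOf β = Fintype.card K - 1) (hδ : δ ≠ 0)
    (P : K → Prop) [DecidablePred P] (hP : ¬P 0) :
    #{j ∈ range (Fintype.card K - 1) | P (δ * β ^ j)} = #{x | P x} := by
  classical
  have hβ0 : β ≠ 0 := by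
    rintro rfl
    have := Fintype.one_lt_card (α := K)
    simp at hβ
    omega
  have hinj : Set.InjOn (fun j => δ * β ^ j) (range (Fintype.card K - 1)) :=
    fun i hi j hj hij => pow_injOn_Iio_orderOf (by simpa [hβ] using hi) (by simpa [hβ] using hj)
      (mul_left_cancel₀ hδ hij)
  have himage : (range (Fintype.card K - 1)).image (fun j => δ * β ^ j) = univ.erase 0 := by
    refine eq_of_subset_of_card_le (fun x hx => ?_) ?_
    · obtain ⟨j, -, rfl⟩ := mem_image.mp hx
      exact mem_erase.mpr ⟨mul_ne_zero hδ (pow_ne_zero _ hβ0), mem_univ _⟩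
    · rw [card_image_of_injOn hinj, card_erase_of_mem (mem_univ _), card_univ, card_range]
  rw [← card_image_of_injOn (hinj.mono (filter_subset _ _)), ← filter_image, himage,
    filter_erase, erase_eq_of_notMem (by simpa using hP)]

variable {F E : Type*} [Field F] [Fintype F] [Field E] [Algebra F E]

theorem card_trace_eq [Fintype E] [DecidableEq F] (c : F) :
    #{x : E | Algebra.trace F E x = c} = Fintype.card F ^ (Module.finrank F E - 1) := by
  have hsurj := Algebra.trace_surjective F E
  have hfib : ∀ b, #{x : E | Algebra.trace F E x = b} = #{x : E | Algebra.trace F E x = c} :=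
    fun b => AddMonoidHom.card_fiber_eq_of_mem_range (Algebra.trace F E) (hsurj b) (hsurj c)
  have hcard : Fintype.card E = Fintype.card F * #{x : E | Algebra.trace F E x = c} := by
    rw [← card_univ, card_eq_sum_card_fiberwise (f := Algebra.trace F E) (t := univ)
      (fun _ _ => mem_univ _), sum_congr rfl fun b _ => hfib b, sum_const, card_univ, smul_eq_mul]
  obtain ⟨n, hn⟩ := Nat.exists_eq_succ_of_ne_zero (Module.finrank_pos (R := F) (M := E)).ne'
  rw [Module.card_eq_pow_finrank (K := F), hn, pow_succ'] at hcard
  rw [hn, Nat.succ_sub_one]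
  exact (Nat.eq_of_mul_eq_mul_left Fintype.card_pos hcard).symm

theorem frobeniusAlgHom_pow_apply (i : ℕ) (x : E) :
    (frobeniusAlgHom F E ^ i) x = x ^ Fintype.card F ^ i := by
  rw [AlgHom.coe_pow, coe_frobeniusAlgHom, pow_iterate]

variable {p : F[X]} {α : E}

theorem injOn_pow_card_pow (hp : Irreducible p) (hα : aeval α p = 0) :
    Set.InjOn (fun i => α ^ Fintype.card F ^ i) (Set.Iio p.natDegree) := by
  suffices ∀ i j, i < j → j < p.natDegree → α ^ Fintype.card F ^ i ≠ α ^ Fintype.card F ^ j by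
    intro i hi j hj hij
    by_contra hne
    rcases lt_or_gt_of_ne hne with hlt | hlt
    · exact this i j hlt hj hij
    · exact this j i hlt hi hij.symm
  intro i j hij hj heq
  have hfix : α ^ Fintype.card F ^ (j - i) = α := by
    apply (frobeniusAlgHom F E ^ i).toRingHom.injective
    simp only [AlgHom.toRingHom_eq_coe, RingHom.coe_coe]
    rw [frobeniusAlgHom_pow_apply, frobeniusAlgHom_pow_apply, ← pow_mul, ← pow_add,
      Nat.sub_add_cancel hij.le, heq]
  have hdvd : p ∣ X ^ Nat.card F ^ (j - i) - X :=
    (hp.dvd_iff_aeval_eq_zero hα).mp (by simp [Nat.card_eq_fintype_card, hfix])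
  have := Nat.le_of_dvd (by omega) (hp.natDegree_dvd_of_dvd_X_pow_card_pow_sub_X hdvd)
  omega

theorem aroots_toFinset_eq_image [DecidableEq E] (hp : Irreducible p) (hα : aeval α p = 0) :
    (p.aroots E).toFinset = (range p.natDegree).image (fun i => α ^ Fintype.card F ^ i) := by
  have hinj := injOn_pow_card_pow hp hα
  refine (eq_of_subset_of_card_le (fun x hx => ?_) ?_).symm
  · obtain ⟨i, -, rfl⟩ := mem_image.mp hx
    rw [Multiset.mem_toFinset, mem_aroots, ← frobeniusAlgHom_pow_apply, aeval_algHom_apply, hα,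
      map_zero]
    exact ⟨hp.ne_zero, rfl⟩
  · rw [card_image_of_injOn (by simpa using hinj), card_range]
    exact (Multiset.toFinset_card_le _).trans (card_roots' _) |>.trans natDegree_map_le

theorem sum_aroots_aeval_eq_trace [Finite E] [DecidableEq E] (hp : Irreducible p)
    (hα : aeval α p = 0) (hdeg : p.natDegree = Module.finrank F E) (h : F[X]) :
    ∑ x ∈ (p.aroots E).toFinset, aeval x h = algebraMap F E (Algebra.trace F E (aeval α h)) := by
  rw [aroots_toFinset_eq_image hp hα, sum_image (by simpa using injOn_pow_card_pow hp hα),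
    algebraMap_trace_eq_sum_pow, Nat.card_eq_fintype_card, ← hdeg]
  refine sum_congr rfl fun i _ => ?_
  rw [← frobeniusAlgHom_pow_apply, aeval_algHom_apply, frobeniusAlgHom_pow_apply]

end FiniteField

section

variable {K : Type*} [Field K] {p g : K[X]}

theorem natDegree_lt_of_mul_eq_X_pow_sub_one {n : ℕ} (hp : 0 < p.natDegree) (hn : 0 < n)
    (hg : (X - 1) * p * g = X ^ n - 1) : g.natDegree < n := by
  rw [← C_1] at hg
  have hg0 : g ≠ 0 := by
    rintro rfl
    exact X_pow_sub_C_ne_zero hn (1 : K) (by rw [← hg, mul_zero])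
  have := congrArg natDegree hg
  rw [natDegree_mul (mul_ne_zero (X_sub_C_ne_zero 1) (ne_zero_of_natDegree_gt hp)) hg0,
    natDegree_mul (X_sub_C_ne_zero 1) (ne_zero_of_natDegree_gt hp), natDegree_X_sub_C,
    natDegree_X_pow_sub_C] at this
  omega

theorem dvd_card_support_of_mul_dvd {m d n : ℕ} (hp : 0 < p.natDegree)
    (hg : (X - 1) * p * g = X ^ m - 1) (hdvd : (X - 1) * p ∣ X ^ d - 1) (hd : 0 < d)
    (hm : m = d * n) : n ∣ #g.support := by
  obtain ⟨h, hh⟩ := hdvd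
  have hX1p : (X - 1) * p ≠ 0 :=
    mul_ne_zero (by simpa using X_sub_C_ne_zero (1 : K)) (ne_zero_of_natDegree_gt hp)
  have hg' : g = h * ∑ t ∈ range n, (X ^ d) ^ t := by
    refine mul_left_cancel₀ hX1p ?_
    rw [← mul_assoc, ← hh, hg, mul_comm, geom_sum_mul, hm, pow_mul]
  rw [hg', card_support_mul_geom_sum (natDegree_lt_of_mul_eq_X_pow_sub_one hp hd hh.symm)]
  exact dvd_mul_right n _

variable {E : Type*} [Field E] [Algebra K E] {α : E}

theorem pow_eq_one_of_mul_eq_X_pow_sub_one {n : ℕ} (hg : (X - 1) * p * g = X ^ n - 1)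
    (hα : aeval α p = 0) : α ^ n = 1 := by
  have := congrArg (aeval α) hg
  simp only [map_mul, hα, mul_zero, zero_mul, map_sub, map_pow, aeval_X, map_one] at this
  exact (sub_eq_zero.mp this.symm)

theorem mul_dvd_X_pow_sub_one_of_pow_eq_one (hp : Irreducible p) (hα : aeval α p = 0)
    (hp1 : p.eval 1 ≠ 0) {d : ℕ} (hd : α ^ d = 1) : (X - 1) * p ∣ X ^ d - 1 := by
  have hcop : IsCoprime (X - 1) p := by
    rw [← C_1, (irreducible_X_sub_C 1).coprime_iff_not_dvd, dvd_iff_isRoot]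
    exact hp1
  refine hcop.mul_dvd (by simpa using sub_dvd_pow_sub_pow (X : K[X]) 1 d) ?_
  exact (hp.dvd_iff_aeval_eq_zero hα).mp (by simp [hd])

end

section

variable {F E : Type*} [Field F] [Field E] [Algebra F E] [Fintype E] {p g : F[X]} {α : E}

theorem cast_card_sub_one : ((Fintype.card E - 1 : ℕ) : F) = -1 := by
  have hcard : ((Fintype.card E : ℕ) : F) = 0 :=
    (algebraMap F E).injective (by rw [map_natCast, FiniteField.cast_card_eq_zero, map_zero])
  rw [Nat.cast_sub Fintype.card_pos, hcard, Nat.cast_one, zero_sub]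

theorem eval_one_mul_eval_one_of_mul_eq (hg : (X - 1) * p * g = X ^ (Fintype.card E - 1) - 1) :
    p.eval 1 * g.eval 1 = -1 := by
  have hgeom : p * g = ∑ i ∈ range (Fintype.card E - 1), X ^ i := by
    refine mul_left_cancel₀ (by simpa using X_sub_C_ne_zero (1 : F)) ?_
    rw [← mul_assoc, hg, mul_comm, geom_sum_mul]
  simpa [eval_finsetSum, cast_card_sub_one] using congrArg (eval 1) hgeom

theorem eval_one_ne_zero_of_mul_eq (hg : (X - 1) * p * g = X ^ (Fintype.card E - 1) - 1) :
    p.eval 1 ≠ 0 ∧ g.eval 1 ≠ 0 :=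
  mul_ne_zero_iff.mp <| by
    rw [eval_one_mul_eval_one_of_mul_eq hg]
    exact neg_ne_zero.mpr one_ne_zero

theorem aeval_ne_zero_of_mul_eq (hp : Irreducible p) (hα : aeval α p = 0)
    (hg : (X - 1) * p * g = X ^ (Fintype.card E - 1) - 1) : aeval α g ≠ 0 := by
  intro hα0
  have hsep : (X ^ (Fintype.card E - 1) - C 1 : F[X]).Separable :=
    separable_X_pow_sub_C 1 (by simp [cast_card_sub_one]) one_ne_zero
  rw [C_1, ← hg, mul_assoc] at hsep
  refine hp.not_isUnit (hsep.squarefree p (Dvd.dvd.mul_left ?_ _))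
  exact mul_dvd_mul_left p ((hp.dvd_iff_aeval_eq_zero hα).mp hα0)

theorem aeval_eq_zero_of_mul_eq (hg : (X - 1) * p * g = X ^ (Fintype.card E - 1) - 1) {x : E}
    (hx0 : x ≠ 0) (hx1 : x ≠ 1) (hpx : aeval x p ≠ 0) : aeval x g = 0 := by
  have := congrArg (aeval x) hg
  simp only [map_mul, map_sub, map_pow, aeval_X, map_one, FiniteField.pow_card_sub_one_eq_one x hx0,
    sub_self] at this
  exact (mul_eq_zero.mp this).resolve_left (mul_ne_zero (sub_ne_zero.mpr hx1) hpx)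

theorem sum_aeval_mul_pow_of_mul_eq [DecidableEq E] (hp1 : p.eval 1 ≠ 0)
    (hg : (X - 1) * p * g = X ^ (Fintype.card E - 1) - 1) {e : ℕ} (he : e ≠ 0) :
    ∑ x : E, aeval x g * x ^ e =
      algebraMap F E (g.eval 1) + ∑ x ∈ (p.aroots E).toFinset, aeval x g * x ^ e := by
  have hp0 : p ≠ 0 := by rintro rfl; simp at hp1
  have h1 : (1 : E) ∉ (p.aroots E).toFinset := by
    simpa [mem_aroots, hp0, aeval_one_eq_algebraMap_eval] using hp1
  rw [← sum_subset (subset_univ (insert 1 (p.aroots E).toFinset)), sum_insert h1, one_pow,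
    mul_one, aeval_one_eq_algebraMap_eval]
  intro x _ hx
  rw [mem_insert, not_or, Multiset.mem_toFinset, mem_aroots, not_and] at hx
  by_cases hx0 : x = 0
  · simp [hx0, he]
  · rw [aeval_eq_zero_of_mul_eq hg hx0 hx.1 (hx.2 hp0), zero_mul]

variable [Fintype F]

theorem coeff_eq_neg_eval_one_add_trace (hp : Irreducible p)
    (hdeg : p.natDegree = Module.finrank F E) (hα : aeval α p = 0)
    (hg : (X - 1) * p * g = X ^ (Fintype.card E - 1) - 1) {j : ℕ} (hj : j < Fintype.card E - 1) :
    g.coeff j = -(g.eval 1 + Algebra.trace F E (aeval α g * α ^ (Fintype.card E - 1 - j))) := by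
  classical
  have hp1 := (eval_one_ne_zero_of_mul_eq hg).1
  have hgdeg : (g.map (algebraMap F E)).natDegree < Fintype.card E - 1 :=
    natDegree_map_le.trans_lt (natDegree_lt_of_mul_eq_X_pow_sub_one
      hp.natDegree_pos (by simp [Fintype.one_lt_card]) hg)
  have hsum := FiniteField.sum_eval_mul_pow_eq_neg_coeff hgdeg hj
  simp only [eval_map_algebraMap, coeff_map] at hsum
  rw [sum_aeval_mul_pow_of_mul_eq hp1 hg (by omega)] at hsum
  have hmul : ∀ x : E, aeval x g * x ^ (Fintype.card E - 1 - j) =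
      aeval x (g * X ^ (Fintype.card E - 1 - j)) := fun x => by rw [map_mul, aeval_X_pow]
  simp only [hmul] at hsum
  rw [FiniteField.sum_aroots_aeval_eq_trace hp hα hdeg, map_mul, aeval_X_pow] at hsum
  apply (algebraMap F E).injective
  simp only [map_neg, map_add]
  linear_combination hsum

theorem card_support_add_card_pow_of_orderOf_eq (hp : Irreducible p)
    (hdeg : p.natDegree = Module.finrank F E) (hα : aeval α p = 0)
    (hg : (X - 1) * p * g = X ^ (Fintype.card E - 1) - 1)
    (hord : orderOf α = Fintype.card E - 1) :
    #g.support + Fintype.card F ^ (Module.finrank F E - 1) = Fintype.card E - 1 := by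
  classical
  have hg1 := (eval_one_ne_zero_of_mul_eq hg).2
  have hαm := pow_eq_one_of_mul_eq_X_pow_sub_one hg hα
  have hα0 : α ≠ 0 := by
    rintro rfl
    have := Fintype.one_lt_card (α := E)
    simp [zero_pow_eq] at hαm
    omega
  have hcoeff : ∀ j ∈ range (Fintype.card E - 1), g.coeff j = 0 ↔
      Algebra.trace F E (aeval α g * α⁻¹ ^ j) = -g.eval 1 := by
    intro j hj
    rw [coeff_eq_neg_eval_one_add_trace hp hdeg hα hg (mem_range.mp hj),
      pow_sub₀ _ hα0 (mem_range.mp hj).le, hαm, one_mul, ← inv_pow]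
    constructor <;> intro h <;> linear_combination -h
  rw [← card_support_add_card_filter_coeff_eq_zero (natDegree_lt_of_mul_eq_X_pow_sub_one
      hp.natDegree_pos (by simp [Fintype.one_lt_card]) hg), filter_congr hcoeff,
    FiniteField.card_filter_range_mul_pow
      (by rw [← hord, orderOf_eq_orderOf_iff]; simp [inv_pow])
      (aeval_ne_zero_of_mul_eq hp hα hg) (fun x => Algebra.trace F E x = -g.eval 1)
      (by simpa [eq_comm] using hg1)]
  congr 1
  convert (FiniteField.card_trace_eq (E := E) (-g.eval 1)).symm

theorem orderOf_eq_of_card_support_add_card_pow (hp : Irreducible p) (hα : aeval α p = 0)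
    (hg : (X - 1) * p * g = X ^ (Fintype.card E - 1) - 1)
    (hsupp : #g.support + Fintype.card F ^ (Module.finrank F E - 1) = Fintype.card E - 1) :
    orderOf α = Fintype.card E - 1 := by
  have hαm := pow_eq_one_of_mul_eq_X_pow_sub_one hg hα
  have hd : 0 < orderOf α := orderOf_pos_iff.mpr
    (isOfFinOrder_iff_pow_eq_one.mpr ⟨_, by simp [Fintype.one_lt_card], hαm⟩)
  obtain ⟨n, hn⟩ := orderOf_dvd_of_pow_eq_one hαm
  have hp1 := (eval_one_ne_zero_of_mul_eq hg).1
  have hn_supp : n ∣ #g.support := dvd_card_support_of_mul_dvd hp.natDegree_pos hg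
    (mul_dvd_X_pow_sub_one_of_pow_eq_one hp hα hp1 (pow_orderOf_eq_one α)) hd hn
  have hn_pow : n ∣ Fintype.card F ^ (Module.finrank F E - 1) :=
    (Nat.dvd_add_right hn_supp).mp (hsupp ▸ Dvd.intro_left _ hn.symm)
  have hn_card : n ∣ Fintype.card E := by
    rw [Module.card_eq_pow_finrank (K := F)]
    exact hn_pow.trans (pow_dvd_pow _ (Nat.sub_le _ _))
  have hn1 : n = 1 := by
    have := Nat.dvd_sub hn_card (Dvd.intro_left _ hn.symm)
    rwa [Nat.sub_sub_self Fintype.card_pos, Nat.dvd_one] at this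
  rw [hn, hn1, mul_one]

theorem orderOf_eq_card_sub_one_iff (hp : Irreducible p) (hdeg : p.natDegree = Module.finrank F E)
    (hα : aeval α p = 0) (hg : (X - 1) * p * g = X ^ (Fintype.card E - 1) - 1) :
    orderOf α = Fintype.card E - 1 ↔
      #g.support + Fintype.card F ^ (Module.finrank F E - 1) = Fintype.card E - 1 :=
  ⟨card_support_add_card_pow_of_orderOf_eq hp hdeg hα hg,
    orderOf_eq_of_card_support_add_card_pow hp hα hg⟩

end

theorem fitzgerald_criterion_general {F : Type*} [Field F] [Fintype F] {k : ℕ}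
    (p : Polynomial F) (hirr : Irreducible p) (hdeg : p.natDegree = k)
    {E : Type*} [Field E] [Algebra F E] (hE : Module.finrank F E = k)
    (α : E) (hα : Polynomial.aeval α p = 0)
    (g : Polynomial F)
    (hg : (X - 1) * p * g = X ^ (Fintype.card F ^ k - 1) - 1) :
    orderOf α = Fintype.card F ^ k - 1 ↔
      g.support.card = (Fintype.card F - 1) * Fintype.card F ^ (k - 1) - 1 := by
  have hk : 0 < k := hdeg ▸ hirr.natDegree_pos
  have : Module.Finite F E := Module.finite_of_finrank_pos (hE ▸ hk)
  have : Finite E := Module.finite_of_finite F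
  have : Fintype E := Fintype.ofFinite E
  have hcard : Fintype.card E = Fintype.card F ^ k := hE ▸ Module.card_eq_pow_finrank
  rw [← hcard] at hg
  rw [← hcard, orderOf_eq_card_sub_one_iff hirr (hdeg.trans hE.symm) hα hg, hE, hcard]
  have hq : 2 ≤ Fintype.card F := Fintype.one_lt_card
  have hpow : Fintype.card F ^ k = Fintype.card F * Fintype.card F ^ (k - 1) := by
    rw [← pow_succ', Nat.sub_add_cancel hk]
  have : 2 * Fintype.card F ^ (k - 1) ≤ Fintype.card F * Fintype.card F ^ (k - 1) :=
    Nat.mul_le_mul_right _ hq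
  have : 1 ≤ Fintype.card F ^ (k - 1) := Nat.one_le_pow _ _ (by omega)
  rw [hpow, Nat.sub_one_mul]
  omega

theorem fitzgerald_criterion {F : Type*} [Field F] [Fintype F] {k : ℕ}
    (p : Polynomial F) (hmon : p.Monic) (hirr : Irreducible p) (hdeg : p.natDegree = k)
    (h1 : p.eval 1 ≠ 0) (h0 : p.eval 0 ≠ 0)
    {E : Type*} [Field E] [Algebra F E] (hE : Module.finrank F E = k)
    (α : E) (hα : Polynomial.aeval α p = 0)
    (g : Polynomial F)
    (hg : (X - 1) * p * g = X ^ (Fintype.card F ^ k - 1) - 1) :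
    orderOf α = Fintype.card F ^ k - 1 ↔
      g.support.card = (Fintype.card F - 1) * Fintype.card F ^ (k - 1) - 1 :=
  fitzgerald_criterion_general p hirr hdeg hE α hα g hg
end

section
/- Let p(x) ∈ F_q[x] be monic irreducible of degree k with p(0) ≠ 0, and let q(x) = x^k p(1/x)/p(0) be its monic reciprocal polynomial with root α ∈ F_{q^k}. Then the formal power series expansion of 1/p(x) is (1/a)·∑_{r≥0} s_{k-1+r} x^r, where a = p(0)·(leading-type constant making p(x) = a·∏(1 - α_i x)), and s_r = Tr_{F_{q^k}/F_q}(α^r / q'(α)). -/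
open Polynomial

/-! Put `d = q'(α)` and `L y = Tr(y / d)`. Since `α` generates `E` and has minimal polynomial `q`,
Euler's formula gives `L (α ^ m) = δ_{m, k-1}` for `m < k`. Since `α` is a root of the reversal
of `p`, the sequence `t m = L (α ^ m)` satisfies the linear recurrence of `p`: the series
`p · ∑ t m X^m` has no coefficient in degree `≥ k`. As `t` vanishes below `k - 1`, that series is
`X^(k-1) · p · ∑ s_{k-1+r} X^r`, whence `p · ∑ s_{k-1+r} X^r = p(0)`. Finally `a = p(0)`, by
evaluating the factorisation of `p` at `0`. -/

namespace Polynomial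

noncomputable def mirrorMulEquiv (R : Type*) [Ring R] [NoZeroDivisors R] : R[X] ≃* R[X] where
  toFun := mirror
  invFun := mirror
  left_inv := mirror_involutive
  right_inv := mirror_involutive
  map_mul' p q := mirror_mul_of_domain p q

noncomputable def monicReciprocal {K : Type*} [Field K] (p : K[X]) : K[X] :=
  C (p.coeff 0)⁻¹ * p.reverse

section monicReciprocal

variable {K : Type*} [Field K] {p : K[X]}

theorem monic_monicReciprocal (h0 : p.coeff 0 ≠ 0) : p.monicReciprocal.Monic := by
  rw [monicReciprocal, Monic, leadingCoeff_mul, leadingCoeff_C, reverse_leadingCoeff,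
    trailingCoeff, natTrailingDegree_eq_zero.mpr (Or.inr h0), inv_mul_cancel₀ h0]

theorem natDegree_monicReciprocal (h0 : p.coeff 0 ≠ 0) :
    p.monicReciprocal.natDegree = p.natDegree := by
  rw [monicReciprocal, natDegree_C_mul (inv_ne_zero h0), reverse_natDegree,
    natTrailingDegree_eq_zero.mpr (Or.inr h0), Nat.sub_zero]

theorem aeval_monicReciprocal_eq_zero_iff {A : Type*} [CommRing A] [Algebra K A] {x : A}
    (h0 : p.coeff 0 ≠ 0) : aeval x p.monicReciprocal = 0 ↔ aeval x p.reverse = 0 := by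
  rw [monicReciprocal, map_mul, aeval_C]
  exact ((inv_ne_zero h0).isUnit.map (algebraMap K A)).mul_right_eq_zero

end monicReciprocal

end Polynomial

theorem Irreducible.reverse {R : Type*} [Ring R] [NoZeroDivisors R] {p : R[X]}
    (hp : Irreducible p) (h0 : p.coeff 0 ≠ 0) : Irreducible p.reverse := by
  have hmirror : p.mirror = p.reverse := by
    rw [mirror, natTrailingDegree_eq_zero.mpr (Or.inr h0), pow_zero, mul_one]
  rw [← hmirror]
  exact (MulEquiv.irreducible_iff (mirrorMulEquiv R)).mpr hp

theorem Irreducible.monicReciprocal {K : Type*} [Field K] {p : K[X]} (hp : Irreducible p)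
    (h0 : p.coeff 0 ≠ 0) : Irreducible p.monicReciprocal :=
  (irreducible_isUnit_mul (isUnit_C.mpr (inv_ne_zero h0).isUnit)).mpr (hp.reverse h0)

theorem Polynomial.coeff_zero_eq_of_map_eq_C_mul_prod {R S ι : Type*} [CommRing R] [CommRing S]
    {f : R →+* S} (hf : Function.Injective f) {p : R[X]} {a : R} (s : Finset ι) (c : ι → S)
    (h : p.map f = C (f a) * ∏ i ∈ s, (1 - C (c i) * X)) : a = p.coeff 0 := by
  have h_eval := congr_arg (eval 0) h
  simp only [eval_map, eval₂_at_zero, eval_mul, eval_C, eval_prod, eval_sub, eval_one, eval_X,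
    mul_zero, sub_zero, Finset.prod_const_one, mul_one] at h_eval
  exact hf h_eval.symm

/-- Euler's formula for the dual basis of a power basis. -/
theorem Algebra.trace_pow_div_aeval_derivative_minpoly {K L : Type*} [Field K] [Field L]
    [Algebra K L] [FiniteDimensional K L] [Algebra.IsSeparable K L] {x : L}
    (hx : Algebra.adjoin K {x} = ⊤) {r : ℕ} (hr : r < Module.finrank K L) :
    Algebra.trace K L (x ^ r / aeval x (minpoly K x).derivative) =
      if r = Module.finrank K L - 1 then 1 else 0 := by
  have hdeg : (minpolyDiv K x).natDegree = Module.finrank K L - 1 := by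
    rw [natDegree_minpolyDiv,
      (PowerBasis.ofAdjoinEqTop (Algebra.IsIntegral.isIntegral x) hx).finrank]
    rfl
  -- leading coefficients in `∑ σ, σ (x ^ r / f'(x)) • σ (f / (X - x)) = X ^ r`, `f` the minpoly
  have hcoeff := congr_arg (coeff · (minpolyDiv K x).natDegree)
    (sum_smul_minpolyDiv_eq_X_pow (AlgebraicClosure K) hx hr)
  simp only [finsetSum_coeff, coeff_map, coeff_smul,
    (minpolyDiv_monic (Algebra.IsIntegral.isIntegral x)).coeff_natDegree, smul_eq_mul, mul_one,
    coeff_X_pow, RingHom.coe_coe] at hcoeff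
  rw [hdeg] at hcoeff
  apply (algebraMap K (AlgebraicClosure K)).injective
  rw [trace_eq_sum_embeddings, hcoeff, apply_ite (algebraMap _ _), map_one, map_zero]
  exact if_congr eq_comm rfl rfl

theorem PowerSeries.inv_eq_C_inv_mul_of_mul_eq_C {K : Type*} [Field K] {φ ψ : PowerSeries K}
    {c : K} (h : φ * ψ = C c) (hc : c ≠ 0) : φ⁻¹ = C c⁻¹ * ψ := by
  have hφ : constantCoeff φ ≠ 0 := by
    apply left_ne_zero_of_mul (b := constantCoeff ψ)
    rwa [← map_mul, h, constantCoeff_C]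
  rw [inv_eq_iff_mul_eq_one hφ, mul_assoc, mul_comm ψ, h, ← map_mul, inv_mul_cancel₀ hc, map_one]

section LinearRecurrence

variable {K A : Type*} [CommRing K] [CommRing A] [Algebra K A] (L : A →ₗ[K] K) {x : A} {p : K[X]}

theorem coeff_coe_mul_mk_eq_zero_of_aeval_reverse_eq_zero (hx : aeval x p.reverse = 0) {N : ℕ}
    (hN : p.natDegree ≤ N) :
    PowerSeries.coeff N ((p : PowerSeries K) * PowerSeries.mk fun m => L (x ^ m)) = 0 := by
  have hreflect : p.reflect N = X ^ (N - p.natDegree) * p.reverse := by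
    conv_lhs => rw [← one_mul p, show N = (N - p.natDegree) + p.natDegree by omega]
    rw [reflect_mul 1 p (by simp) le_rfl, reflect_one, reverse]
  have hsum : aeval x (p.reflect N) = ∑ i ∈ Finset.range (N + 1), p.coeff (N - i) • x ^ i := by
    rw [aeval_eq_sum_range' (n := N + 1) (natDegree_reflect_le.trans_lt (max_lt (by omega)
      (by omega)))]
    refine Finset.sum_congr rfl fun i hi => ?_
    rw [coeff_reflect, revAt_le (Finset.mem_range_succ_iff.mp hi)]
  calc PowerSeries.coeff N ((p : PowerSeries K) * PowerSeries.mk fun m => L (x ^ m))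
      = ∑ i ∈ Finset.range (N + 1), L (x ^ i) * p.coeff (N - i) := by
        rw [mul_comm, PowerSeries.coeff_mul, Finset.Nat.sum_antidiagonal_eq_sum_range_succ
          (fun i j => PowerSeries.coeff i (PowerSeries.mk fun m => L (x ^ m)) *
            PowerSeries.coeff j (p : PowerSeries K))]
        simp only [PowerSeries.coeff_mk, coeff_coe]
    _ = L (aeval x (p.reflect N)) := by simp [hsum, map_sum, mul_comm]
    _ = 0 := by rw [hreflect, map_mul, hx, mul_zero, map_zero]

theorem coe_mul_mk_eq_C_coeff_zero_of_aeval_reverse_eq_zero (hx : aeval x p.reverse = 0)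
    (hp : 0 < p.natDegree)
    (hL : ∀ m < p.natDegree, L (x ^ m) = if m = p.natDegree - 1 then 1 else 0) :
    (p : PowerSeries K) * PowerSeries.mk (fun r => L (x ^ (p.natDegree - 1 + r))) =
      PowerSeries.C (p.coeff 0) := by
  set k := p.natDegree
  have hshift : PowerSeries.X ^ (k - 1) * PowerSeries.mk (fun r => L (x ^ (k - 1 + r))) =
      PowerSeries.mk fun m => L (x ^ m) := by
    ext n
    rw [PowerSeries.coeff_X_pow_mul', PowerSeries.coeff_mk, PowerSeries.coeff_mk]
    split_ifs with h
    · rw [Nat.add_sub_cancel' h]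
    · rw [hL n (by omega), if_neg (by omega)]
  ext r
  rw [PowerSeries.coeff_C]
  rcases r with _ | r
  · simp [hL (k - 1) (by omega)]
  · rw [← PowerSeries.coeff_X_pow_mul _ (k - 1), mul_left_comm, hshift,
      coeff_coe_mul_mk_eq_zero_of_aeval_reverse_eq_zero L hx (by omega), if_neg r.succ_ne_zero]

end LinearRecurrence

theorem power_series_expansion_of_inverse_general {F : Type*} [Field F] [Fintype F] {k : ℕ}
    (p : Polynomial F) (hirr : Irreducible p) (hdeg : p.natDegree = k)
    (h0 : p.eval 0 ≠ 0)
    {E : Type*} [Field E] [Algebra F E] (hE : Module.finrank F E = k)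
    (qp : Polynomial F) (hqp : qp = Polynomial.C (p.coeff 0)⁻¹ * p.reverse)
    (α : E) (hα : Polynomial.aeval α qp = 0)
    (a : F)
    (ha : p.map (algebraMap F E) =
      Polynomial.C (algebraMap F E a) *
        ∏ i : Fin k, (1 - Polynomial.C (α ^ (Fintype.card F) ^ (i : ℕ)) * X)) :
    ∀ r : ℕ,
      PowerSeries.coeff r ((p : PowerSeries F)⁻¹) =
        a⁻¹ * Algebra.trace F E (α ^ (k - 1 + r) / Polynomial.aeval α qp.derivative) := by
  change qp = p.monicReciprocal at hqp
  subst hqp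
  have hc0 : p.coeff 0 ≠ 0 := by rwa [coeff_zero_eq_eval_zero]
  have hk : 0 < k := hdeg ▸ hirr.natDegree_pos
  have : FiniteDimensional F E := Module.finite_of_finrank_pos (hE ▸ hk)
  have hmin : minpoly F α = p.monicReciprocal :=
    (minpoly.eq_of_irreducible_of_monic (hirr.monicReciprocal hc0) hα
      (monic_monicReciprocal hc0)).symm
  have hgen : Algebra.adjoin F {α} = ⊤ :=
    Algebra.adjoin_eq_top_of_primitive_element (Algebra.IsAlgebraic.isAlgebraic α)
      ((Field.primitive_element_iff_minpoly_natDegree_eq F α).mpr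
        (by rw [hmin, natDegree_monicReciprocal hc0, hdeg, hE]))
  let L : E →ₗ[F] F :=
    Algebra.trace F E ∘ₗ LinearMap.mulRight F (aeval α p.monicReciprocal.derivative)⁻¹
  have hexp := coe_mul_mk_eq_C_coeff_zero_of_aeval_reverse_eq_zero L
    ((aeval_monicReciprocal_eq_zero_iff hc0).mp hα) (hdeg ▸ hk) fun m hm => by
      simpa [L, div_eq_mul_inv, hmin, hdeg, hE] using
        Algebra.trace_pow_div_aeval_derivative_minpoly hgen (hE ▸ hdeg ▸ hm)
  rw [hdeg] at hexp
  intro r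
  rw [PowerSeries.inv_eq_C_inv_mul_of_mul_eq_C hexp hc0,
    coeff_zero_eq_of_map_eq_C_mul_prod (algebraMap F E).injective _ _ ha]
  simp [L, div_eq_mul_inv]

theorem power_series_expansion_of_inverse {F : Type*} [Field F] [Fintype F] {k : ℕ}
    (p : Polynomial F) (hmon : p.Monic) (hirr : Irreducible p) (hdeg : p.natDegree = k)
    (h0 : p.eval 0 ≠ 0)
    {E : Type*} [Field E] [Algebra F E] (hE : Module.finrank F E = k)
    (qp : Polynomial F) (hqp : qp = Polynomial.C (p.coeff 0)⁻¹ * p.reverse)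
    (α : E) (hα : Polynomial.aeval α qp = 0)
    (a : F)
    (ha : p.map (algebraMap F E) =
      Polynomial.C (algebraMap F E a) *
        ∏ i : Fin k, (1 - Polynomial.C (α ^ (Fintype.card F) ^ (i : ℕ)) * X)) :
    ∀ r : ℕ,
      PowerSeries.coeff r ((p : PowerSeries F)⁻¹) =
        a⁻¹ * Algebra.trace F E (α ^ (k - 1 + r) / Polynomial.aeval α qp.derivative) :=
  power_series_expansion_of_inverse_general p hirr hdeg h0 hE qp hqp α hα a ha
end

section
/- Let p(x) ∈ F_q[x] be monic irreducible of degree k with p(0) ≠ 0 and p(1) ≠ 0, let q(x) be the monic reciprocal of p with root α, let β = α^{k-1}/(q'(α)(1 - α)), and let g(x) = (x^{q^k-1} - 1)/((x-1)p(x)). Then for 0 ≤ t ≤ q^k - 2, the coefficient of x^t in g(x) equals (1/a)·(Tr(β) - Tr(β α^{t+1})), where a ∈ F_q^* is the constant with p(x) = a·∏_{i=1}^k (1 - α_i x) and α_1,...,α_k are the roots of q. -/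
/-!
Over `E`, `p = a ∏ x ∈ R, (1 - x X)` where `R` is the set of the `k` distinct conjugates
`α ^ q ^ i` of `α`, so `(1 - X) p = a ∏ x ∈ {1} ∪ R, (1 - x X)`. Partial fractions,
`1 / ∏ x ∈ s, (1 - x X) = ∑ x ∈ s, c_x / (1 - x X)` with
`c_x = x ^ (#s - 1) / ∏ y ≠ x, (x - y)`, give the power series coefficients of
`1 / ((1 - X) p)`, and these agree with those of `g = (1 - X ^ (q ^ k - 1)) / ((1 - X) p)` below
degree `q ^ k - 1`. The reciprocal polynomial is `∏ x ∈ R, (X - x)`, so its derivative at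
`x = σ α` is `∏ y ≠ x, (x - y)` and `c_x = -x σ β`; evaluating the decomposition at `X = 0`
gives `∑ c_x = 1`, both for `s = R` and for `s = {1} ∪ R`, which turns `c_1` into `Tr β`.
-/

open Polynomial Finset

namespace Polynomial

theorem natDegree_one_sub_C_mul_X {R : Type*} [Ring R] [Nontrivial R] {x : R} (hx : x ≠ 0) :
    (1 - C x * X).natDegree = 1 := by
  compute_degree!

theorem natDegree_prod_one_sub_C_mul_X_le {R : Type*} [CommRing R] (s : Finset R) :
    (∏ y ∈ s, (1 - C y * X)).natDegree ≤ #s := by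
  refine (natDegree_prod_le _ _).trans ?_
  refine (sum_le_card_nsmul s _ 1 fun y _ => ?_).trans_eq (smul_eq_mul _ _ |>.trans (mul_one _))
  compute_degree

theorem reverse_prod {ι R : Type*} [CommSemiring R] [NoZeroDivisors R] (s : Finset ι)
    (f : ι → R[X]) : (∏ i ∈ s, f i).reverse = ∏ i ∈ s, (f i).reverse :=
  map_prod (⟨⟨reverse, by simpa using reverse_C (1 : R)⟩, reverse_mul_of_domain⟩ :
    R[X] →* R[X]) f s

theorem reverse_map {R S : Type*} [Semiring R] [Semiring S] {f : R →+* S}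
    (hf : Function.Injective f) (p : R[X]) : (p.map f).reverse = p.reverse.map f := by
  rw [reverse, reverse, natDegree_map_eq_of_injective hf, reflect_map]

theorem reverse_one_sub_C_mul_X {R : Type*} [Ring R] {x : R} (hx : x ≠ 0) :
    (1 - C x * X).reverse = X - C x := by
  rw [show (1 - C x * X : R[X]) = C (-x) * X + C 1 by simp [sub_eq_neg_add],
    reverse_add_C, reverse_mul_X, reverse_C, natDegree_C_mul_X _ (neg_ne_zero.2 hx)]
  simp [sub_eq_neg_add, add_comm]

theorem eval_derivative_prod_X_sub_C {K : Type*} [Field K] [DecidableEq K] {s : Finset K}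
    {x : K} (hx : x ∈ s) :
    (derivative (∏ y ∈ s, (X - C y))).eval x = ∏ y ∈ s.erase x, (x - y) := by
  simpa [Lagrange.nodal, eval_prod] using
    Lagrange.eval_nodal_derivative_eval_node_eq (v := id) hx

end Polynomial

theorem coe_one_sub_C_mul_X_mul_mk_pow {R : Type*} [CommRing R] (x : R) :
    ((1 - C x * X : R[X]) : PowerSeries R) * PowerSeries.mk (x ^ ·) = 1 := by
  have := congrArg (PowerSeries.rescale x) (PowerSeries.mk_one_mul_one_sub_eq_one R)
  rw [map_mul, PowerSeries.rescale_mk, map_sub, map_one, PowerSeries.rescale_X] at this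
  simp only [Pi.one_apply, mul_one] at this
  rw [Polynomial.coe_sub, Polynomial.coe_one, Polynomial.coe_mul, Polynomial.coe_C,
    Polynomial.coe_X, mul_comm, this]

theorem coeff_eq_coeff_of_mul_eq_one_sub_X_pow {R : Type*} [CommRing R] {f g : R[X]}
    {S : PowerSeries R} {N t : ℕ} (hS : (f : PowerSeries R) * S = 1)
    (hfg : f * g = 1 - X ^ N) (ht : t < N) :
    g.coeff t = PowerSeries.coeff t S := by
  have hg : (g : PowerSeries R) = S - PowerSeries.X ^ N * S := by
    calc (g : PowerSeries R) = S * ((f * g : R[X]) : PowerSeries R) := by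
          rw [Polynomial.coe_mul, ← mul_assoc, mul_comm S, hS, one_mul]
      _ = S - PowerSeries.X ^ N * S := by
          rw [hfg, Polynomial.coe_sub, Polynomial.coe_one, Polynomial.coe_pow, Polynomial.coe_X]
          ring
  rw [← coeff_coe, hg, map_sub, PowerSeries.coeff_X_pow_mul', if_neg (by omega), sub_zero]

section PartialFractions

variable {K : Type*} [Field K] [DecidableEq K]

/-- The coefficient of `1 / (1 - x T)` in the partial fraction decomposition of
`1 / ∏ y ∈ s, (1 - y T)`. -/
def partialFractionCoeff (s : Finset K) (x : K) : K :=
  x ^ (#s - 1) / ∏ y ∈ s.erase x, (x - y)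

theorem prod_erase_sub_ne_zero (s : Finset K) (x : K) : ∏ y ∈ s.erase x, (x - y) ≠ 0 :=
  prod_ne_zero_iff.2 fun _ hy => sub_ne_zero.2 (ne_of_mem_erase hy).symm

theorem sum_C_partialFractionCoeff_mul_prod_erase {s : Finset K} (hs : s.Nonempty)
    (h0 : 0 ∉ s) :
    ∑ x ∈ s, C (partialFractionCoeff s x) * ∏ y ∈ s.erase x, (1 - C y * X) = 1 := by
  -- both sides have degree `< #s` and agree at the points `x⁻¹`, `x ∈ s`
  refine eq_of_natDegree_lt_card_of_eval_eq' _ _ (s.image (·⁻¹)) ?_ ?_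
  · simp only [mem_image, forall_exists_index, and_imp, forall_apply_eq_imp_iff₂, eval_one,
      eval_finsetSum, eval_mul, eval_C, eval_prod, eval_sub, eval_X]
    intro x hx
    have hx0 : x ≠ 0 := ne_of_mem_of_not_mem hx h0
    rw [sum_eq_single_of_mem x hx]
    · have hprod : ∏ y ∈ s.erase x, (1 - y * x⁻¹) =
          (∏ y ∈ s.erase x, (x - y)) / x ^ (#s - 1) := by
        rw [← card_erase_of_mem hx, ← prod_const, ← prod_div_distrib]
        exact prod_congr rfl fun y _ => by field_simp
      rw [hprod, partialFractionCoeff]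
      have := prod_erase_sub_ne_zero s x
      field_simp
    · intro z _ hzx
      rw [prod_eq_zero (mem_erase.2 ⟨hzx.symm, hx⟩) (by simp [hx0]), mul_zero]
  · rw [card_image_of_injective _ inv_injective, natDegree_one, max_eq_left (Nat.zero_le _)]
    refine (natDegree_sum_le_of_forall_le _ _ (n := #s - 1) fun x hx => ?_).trans_lt
      (Nat.sub_lt hs.card_pos one_pos)
    refine natDegree_C_mul_le _ _ |>.trans ?_
    simpa [card_erase_of_mem hx] using natDegree_prod_one_sub_C_mul_X_le (s.erase x)

theorem sum_partialFractionCoeff {s : Finset K} (hs : s.Nonempty) (h0 : 0 ∉ s) :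
    ∑ x ∈ s, partialFractionCoeff s x = 1 := by
  simpa [eval_finsetSum, eval_prod] using
    congrArg (eval 0) (sum_C_partialFractionCoeff_mul_prod_erase hs h0)

theorem coe_prod_one_sub_C_mul_X_mul_mk_sum_partialFractionCoeff {s : Finset K}
    (hs : s.Nonempty) (h0 : 0 ∉ s) :
    ((∏ x ∈ s, (1 - C x * X) : K[X]) : PowerSeries K) *
      PowerSeries.mk (fun t => ∑ x ∈ s, partialFractionCoeff s x * x ^ t) = 1 := by
  have hmk : PowerSeries.mk (fun t => ∑ x ∈ s, partialFractionCoeff s x * x ^ t) =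
      ∑ x ∈ s, PowerSeries.C (partialFractionCoeff s x) * PowerSeries.mk (x ^ ·) := by
    ext t; simp [map_sum, PowerSeries.coeff_C_mul]
  calc _ = ((∑ x ∈ s, C (partialFractionCoeff s x) * ∏ y ∈ s.erase x, (1 - C y * X) :
        K[X]) : PowerSeries K) := by
        rw [hmk, mul_sum, ← coeToPowerSeries.ringHom_apply (φ := ∑ x ∈ s, _), map_sum]
        refine sum_congr rfl fun x hx => ?_
        rw [← mul_prod_erase s _ hx]
        simp only [coeToPowerSeries.ringHom_apply, Polynomial.coe_mul, Polynomial.coe_C]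
        linear_combination (PowerSeries.C (partialFractionCoeff s x) *
          ((∏ y ∈ s.erase x, (1 - C y * X) : K[X]) : PowerSeries K)) *
            coe_one_sub_C_mul_X_mul_mk_pow x
    _ = 1 := by rw [sum_C_partialFractionCoeff_mul_prod_erase hs h0, Polynomial.coe_one]

theorem partialFractionCoeff_insert_one_of_mem {s : Finset K} {x : K} (h1 : 1 ∉ s)
    (hx : x ∈ s) :
    partialFractionCoeff (insert 1 s) x = -(x * (partialFractionCoeff s x / (1 - x))) := by
  have hx1 : x ≠ 1 := ne_of_mem_of_not_mem hx h1
  have hpow : x ^ #s = x * x ^ (#s - 1) := by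
    rw [← pow_succ', Nat.sub_add_cancel (card_pos.2 ⟨x, hx⟩)]
  rw [partialFractionCoeff, partialFractionCoeff, card_insert_of_notMem h1, Nat.add_sub_cancel,
    erase_insert_of_ne hx1.symm, prod_insert (fun h => h1 (mem_of_mem_erase h)), hpow]
  have := prod_erase_sub_ne_zero s x
  have := sub_ne_zero.2 hx1
  field_simp
  ring

theorem partialFractionCoeff_insert_one_self {s : Finset K} (hs : s.Nonempty) (h0 : 0 ∉ s)
    (h1 : 1 ∉ s) :
    partialFractionCoeff (insert 1 s) 1 = ∑ x ∈ s, partialFractionCoeff s x / (1 - x) := by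
  have hsum := sum_partialFractionCoeff (insert_nonempty 1 s) (by simp [h0])
  rw [sum_insert h1, sum_congr rfl fun x hx => partialFractionCoeff_insert_one_of_mem h1 hx,
    sum_neg_distrib] at hsum
  calc partialFractionCoeff (insert 1 s) 1
      = ∑ x ∈ s, partialFractionCoeff s x +
          ∑ x ∈ s, x * (partialFractionCoeff s x / (1 - x)) := by
        rw [sum_partialFractionCoeff hs h0]
        linear_combination hsum
    _ = ∑ x ∈ s, partialFractionCoeff s x / (1 - x) := by
        rw [← sum_add_distrib]
        refine sum_congr rfl fun x hx => ?_
        have := sub_ne_zero.2 (ne_of_mem_of_not_mem hx h1).symm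
        field_simp
        ring

theorem mul_coeff_eq_sum_of_mul_prod_one_sub {s : Finset K} (hs : s.Nonempty) (h0 : 0 ∉ s)
    (h1 : 1 ∉ s) {c : K} {G : K[X]} {N t : ℕ}
    (h : (X - 1) * (C c * ∏ x ∈ s, (1 - C x * X)) * G = X ^ N - 1) (ht : t < N) :
    c * G.coeff t = ∑ x ∈ s, partialFractionCoeff s x / (1 - x) * (1 - x ^ (t + 1)) := by
  have hf : (∏ x ∈ insert 1 s, (1 - C x * X)) * (C c * G) = 1 - X ^ N := by
    rw [prod_insert h1, C_1, one_mul]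
    linear_combination -h
  have hS := coe_prod_one_sub_C_mul_X_mul_mk_sum_partialFractionCoeff (insert_nonempty 1 s)
    (by simp [h0])
  rw [← coeff_C_mul, coeff_eq_coeff_of_mul_eq_one_sub_X_pow hS hf ht, PowerSeries.coeff_mk,
    sum_insert h1, partialFractionCoeff_insert_one_self hs h0 h1, one_pow, mul_one,
    ← sum_add_distrib]
  refine sum_congr rfl fun x hx => ?_
  rw [partialFractionCoeff_insert_one_of_mem h1 hx]
  ring

end PartialFractions

section Factorization

variable {K L : Type*} [Field K] [Field L] [Algebra K L] {p : K[X]} {c : L}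

theorem map_reciprocal_eq_prod {s : Finset L} (hc : c ≠ 0) (h0 : 0 ∉ s)
    (hp : p.map (algebraMap K L) = C c * ∏ x ∈ s, (1 - C x * X)) :
    (C (p.coeff 0)⁻¹ * p.reverse).map (algebraMap K L) = ∏ x ∈ s, (X - C x) := by
  rw [Polynomial.map_mul, map_C, map_inv₀, ← coeff_map,
    ← reverse_map (algebraMap K L).injective, hp, reverse_mul_of_domain, reverse_C, reverse_prod,
    prod_congr rfl fun x hx => reverse_one_sub_C_mul_X (ne_of_mem_of_not_mem hx h0),
    coeff_zero_eq_eval_zero]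
  simp only [eval_mul, eval_C, eval_prod, eval_sub, eval_one, eval_X, mul_zero, sub_zero,
    prod_const_one, mul_one]
  rw [← mul_assoc, ← C_mul, inv_mul_cancel₀ hc, C_1, one_mul]

theorem one_notMem_of_map_eq_C_mul_prod {s : Finset L} (h1 : p.eval 1 ≠ 0)
    (hp : p.map (algebraMap K L) = C c * ∏ x ∈ s, (1 - C x * X)) : 1 ∉ s := fun hs => by
  apply h1
  apply (algebraMap K L).injective
  rw [map_zero, ← eval_one_map, hp, eval_mul, eval_prod, prod_eq_zero hs (by simp), mul_zero]

theorem ne_zero_of_map_eq_C_mul_prod_pow {α : L} {k n : ℕ} (hn : n ≠ 0)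
    (hdeg : p.natDegree ≠ 0)
    (hp : p.map (algebraMap K L) = C c * ∏ i : Fin k, (1 - C (α ^ n ^ (i : ℕ)) * X)) :
    α ≠ 0 := by
  rintro rfl
  apply hdeg
  simpa [zero_pow (pow_ne_zero _ hn)] using congrArg natDegree hp

theorem injective_of_squarefree_C_mul_prod {ι : Type*} [Fintype ι] [DecidableEq ι] {r : ι → L}
    (hsq : Squarefree (C c * ∏ i, (1 - C (r i) * X))) (hr : ∀ i, r i ≠ 0) :
    Function.Injective r := by
  intro i j hij
  by_contra hne
  have hdvd : (1 - C (r i) * X) * (1 - C (r i) * X) ∣ C c * ∏ i, (1 - C (r i) * X) := by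
    rw [← mul_prod_erase univ _ (mem_univ i),
      ← mul_prod_erase (univ.erase i) _ (mem_erase.2 ⟨Ne.symm hne, mem_univ j⟩), ← hij]
    exact Dvd.intro (C c * ∏ l ∈ (univ.erase i).erase j, (1 - C (r l) * X)) (by ring)
  have := natDegree_eq_zero_of_isUnit (hsq _ hdvd)
  rw [natDegree_one_sub_C_mul_X (hr i)] at this
  exact one_ne_zero this

end Factorization

section Conjugates

variable (F : Type*) {E : Type*} [Fintype F] [Field E] [DecidableEq E]

def conjugates (k : ℕ) (α : E) : Finset E :=
  univ.image fun i : Fin k => α ^ Fintype.card F ^ (i : ℕ)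

variable {F}

theorem sum_conjugates {M : Type*} [AddCommMonoid M] {k : ℕ} {α : E}
    (hinj : Function.Injective fun i : Fin k => α ^ Fintype.card F ^ (i : ℕ)) (f : E → M) :
    ∑ x ∈ conjugates F k α, f x = ∑ i : Fin k, f (α ^ Fintype.card F ^ (i : ℕ)) :=
  sum_image fun _ _ _ _ h => hinj h

theorem conjugates_nonempty {k : ℕ} (hk : k ≠ 0) (α : E) : (conjugates F k α).Nonempty :=
  (univ_nonempty_iff.2 ⟨⟨0, Nat.pos_of_ne_zero hk⟩⟩).image _

theorem zero_notMem_conjugates {k : ℕ} {α : E} (hα : α ≠ 0) : 0 ∉ conjugates F k α :=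
  fun h => by
    obtain ⟨i, -, hi⟩ := mem_image.1 h
    exact pow_ne_zero _ hα hi

end Conjugates

section FiniteField

variable {F E : Type*} [Field F] [Fintype F] [Field E] [Algebra F E]

theorem frobeniusAlgHom_pow_apply (i : ℕ) (z : E) :
    (FiniteField.frobeniusAlgHom F E ^ i) z = z ^ Fintype.card F ^ i := by
  rw [AlgHom.coe_pow, FiniteField.coe_frobeniusAlgHom, pow_iterate]

theorem algebraMap_trace_eq_sum_frobeniusAlgHom_pow [Finite E] (z : E) :
    algebraMap F E (Algebra.trace F E z) =
      ∑ i ∈ range (Module.finrank F E), (FiniteField.frobeniusAlgHom F E ^ i) z := by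
  simp [FiniteField.algebraMap_trace_eq_sum_pow, frobeniusAlgHom_pow_apply,
    Nat.card_eq_fintype_card]

theorem algebraMap_trace_mul_pow_eq_sum [Finite E] [DecidableEq E] {k : ℕ}
    (hE : Module.finrank F E = k) {qp : F[X]} {α β : E}
    (hinj : Function.Injective fun i : Fin k => α ^ Fintype.card F ^ (i : ℕ))
    (hqp : qp.map (algebraMap F E) = ∏ x ∈ conjugates F k α, (X - C x))
    (hβ : β = α ^ (k - 1) / (aeval α qp.derivative * (1 - α))) (m : ℕ) :
    algebraMap F E (Algebra.trace F E (β * α ^ m)) =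
      ∑ x ∈ conjugates F k α,
        partialFractionCoeff (conjugates F k α) x / (1 - x) * x ^ m := by
  rw [algebraMap_trace_eq_sum_frobeniusAlgHom_pow, hE, sum_conjugates hinj,
    ← Fin.sum_univ_eq_sum_range]
  refine sum_congr rfl fun i _ => ?_
  set φ := FiniteField.frobeniusAlgHom F E ^ (i : ℕ)
  have hφα : φ α = α ^ Fintype.card F ^ (i : ℕ) := frobeniusAlgHom_pow_apply i α
  have hmem : φ α ∈ conjugates F k α := hφα ▸ mem_image_of_mem _ (mem_univ i)
  have hder :
      aeval (φ α) qp.derivative = ∏ y ∈ (conjugates F k α).erase (φ α), (φ α - y) := by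
    rw [aeval_def, ← eval_map, ← derivative_map, hqp, eval_derivative_prod_X_sub_C hmem]
  have hcard : #(conjugates F k α) = k := by
    rw [conjugates, card_image_of_injective _ hinj, card_univ, Fintype.card_fin]
  rw [map_mul, map_pow, hβ, map_div₀, map_mul, map_sub, map_one, map_pow,
    ← aeval_algHom_apply, hder, partialFractionCoeff, hcard, hφα, div_div]

end FiniteField

theorem coeff_g_eq_trace_difference_general {F : Type*} [Field F] [Fintype F] {k : ℕ}
    (p : Polynomial F) (hirr : Irreducible p) (hdeg : p.natDegree = k)
    (h1 : p.eval 1 ≠ 0)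
    {E : Type*} [Field E] [Algebra F E] (hE : Module.finrank F E = k)
    (qp : Polynomial F) (hqp : qp = Polynomial.C (p.coeff 0)⁻¹ * p.reverse)
    (α : E)
    (a : F)
    (ha : p.map (algebraMap F E) =
      Polynomial.C (algebraMap F E a) *
        ∏ i : Fin k, (1 - Polynomial.C (α ^ (Fintype.card F) ^ (i : ℕ)) * X))
    (β : E) (hβ : β = α ^ (k - 1) / (Polynomial.aeval α qp.derivative * (1 - α)))
    (g : Polynomial F)
    (hg : (X - 1) * p * g = X ^ (Fintype.card F ^ k - 1) - 1) :
    ∀ t : ℕ, t ≤ Fintype.card F ^ k - 2 →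
      g.coeff t =
        a⁻¹ * (Algebra.trace F E β - Algebra.trace F E (β * α ^ (t + 1))) := by
  classical
  intro t ht
  have hk : 0 < k := hdeg ▸ hirr.natDegree_pos
  have : Module.Finite F E := Module.finite_of_finrank_pos (hE ▸ hk)
  have : Finite E := Module.finite_of_finite F
  have ha0 : algebraMap F E a ≠ 0 := fun h => by simp [h, hirr.ne_zero] at ha
  have hα0 : α ≠ 0 :=
    ne_zero_of_map_eq_C_mul_prod_pow Fintype.card_ne_zero hirr.natDegree_pos.ne' ha
  have hinj := injective_of_squarefree_C_mul_prod
    (ha ▸ (PerfectField.separable_of_irreducible hirr).map.squarefree) fun i => pow_ne_zero _ hα0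
  have hR : p.map (algebraMap F E) =
      C (algebraMap F E a) * ∏ x ∈ conjugates F k α, (1 - C x * X) := by
    rw [ha, conjugates, prod_image fun _ _ _ _ h => hinj h]
  have h0R : 0 ∉ conjugates F k α := zero_notMem_conjugates hα0
  have htN : t < Fintype.card F ^ k - 1 := by
    have : 2 ≤ Fintype.card F ^ k := (Nat.le_self_pow hk.ne' _).trans' Fintype.one_lt_card
    omega
  have hcoeff := mul_coeff_eq_sum_of_mul_prod_one_sub (conjugates_nonempty hk.ne' α) h0R
    (one_notMem_of_map_eq_C_mul_prod h1 hR) (G := g.map (algebraMap F E))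
    (by rw [← hR]; simpa using congrArg (map (algebraMap F E)) hg) htN
  have htr := algebraMap_trace_mul_pow_eq_sum hE hinj
    (hqp ▸ map_reciprocal_eq_prod ha0 h0R hR) hβ
  have htr0 := htr 0
  simp only [pow_zero, mul_one] at htr0
  apply (algebraMap F E).injective
  rw [map_mul, map_inv₀, map_sub, htr0, htr, ← sum_sub_distrib, eq_inv_mul_iff_mul_eq₀ ha0,
    ← coeff_map, hcoeff]
  exact sum_congr rfl fun x _ => by ring

theorem coeff_g_eq_trace_difference {F : Type*} [Field F] [Fintype F] {k : ℕ}
    (p : Polynomial F) (hmon : p.Monic) (hirr : Irreducible p) (hdeg : p.natDegree = k)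
    (h0 : p.eval 0 ≠ 0) (h1 : p.eval 1 ≠ 0)
    {E : Type*} [Field E] [Algebra F E] (hE : Module.finrank F E = k)
    (qp : Polynomial F) (hqp : qp = Polynomial.C (p.coeff 0)⁻¹ * p.reverse)
    (α : E) (hα : Polynomial.aeval α qp = 0)
    (a : F)
    (ha : p.map (algebraMap F E) =
      Polynomial.C (algebraMap F E a) *
        ∏ i : Fin k, (1 - Polynomial.C (α ^ (Fintype.card F) ^ (i : ℕ)) * X))
    (β : E) (hβ : β = α ^ (k - 1) / (Polynomial.aeval α qp.derivative * (1 - α)))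
    (g : Polynomial F)
    (hg : (X - 1) * p * g = X ^ (Fintype.card F ^ k - 1) - 1) :
    ∀ t : ℕ, t ≤ Fintype.card F ^ k - 2 →
      g.coeff t =
        a⁻¹ * (Algebra.trace F E β - Algebra.trace F E (β * α ^ (t + 1))) :=
  coeff_g_eq_trace_difference_general p hirr hdeg h1 hE qp hqp α a ha β hβ g hg
end
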